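/- arXiv:2402.10383 — 4 statements merged into one kernel-verified Lean document; each statement's English description precedes it below -/
import Mathlib

section
/- Let X, Y and V, W be two interpolation couples, θ ∈ (0,1), p ∈ [1,∞], and let T : X+Y → V+W be a linear operator whose restrictions T|_X : X → V and T|_Y : Y → W are bounded. Then the restriction of T to (X,Y)_{θ,p} is a bounded operator into (V,W)_{θ,p} with operator norm at most ‖T|_X‖^{1-θ} · ‖T|_Y‖^θ. -/
open MeasureTheory ENNReal

noncomputable section

/-- An interpolation couple: two Banach spaces `X`, `Y` continuously and injectively
embedded into a common Hausdorff topological vector space `Z`. -/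
structure InterpCouple (X Y Z : Type*) [NormedAddCommGroup X] [NormedSpace ℝ X]
    [NormedAddCommGroup Y] [NormedSpace ℝ Y]
    [AddCommGroup Z] [Module ℝ Z] [TopologicalSpace Z] where
  iX : X →ₗ[ℝ] Z
  iY : Y →ₗ[ℝ] Z
  injX : Function.Injective iX
  injY : Function.Injective iY
  contX : Continuous iX
  contY : Continuous iY

namespace InterpCouple

variable {X Y Z : Type*} [NormedAddCommGroup X] [NormedSpace ℝ X]
  [NormedAddCommGroup Y] [NormedSpace ℝ Y]
  [AddCommGroup Z] [Module ℝ Z] [TopologicalSpace Z]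
  (C : InterpCouple X Y Z)

/-- The sum space `X + Y`, as a subset of `Z`. -/
def sum : Set Z := {z | ∃ a b, z = C.iX a + C.iY b}

/-- The norm of `X + Y`. -/
def sumNorm (z : Z) : ℝ :=
  sInf {r | ∃ a b, z = C.iX a + C.iY b ∧ r = ‖a‖ + ‖b‖}

/-- The intersection `X ∩ Y`, as a subset of `Z`. -/
def inter : Set Z := {z | (∃ a, C.iX a = z) ∧ ∃ b, C.iY b = z}

/-- The norm of `X ∩ Y`. -/
def interNorm (z : Z) : ℝ :=
  sInf {r | ∃ a b, C.iX a = z ∧ C.iY b = z ∧ r = max ‖a‖ ‖b‖}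

/-- The `K`-functional of the couple. -/
def K (t : ℝ) (z : Z) : ℝ :=
  sInf {r | ∃ a b, z = C.iX a + C.iY b ∧ r = ‖a‖ + t * ‖b‖}

/-- The measure `dt/t` on `(0,∞)`. -/
def mustar : Measure ℝ :=
  (volume.restrict (Set.Ioi (0:ℝ))).withDensity fun t => ENNReal.ofReal t⁻¹

/-- The norm `‖t^{-θ} K(t,x)‖_{L^p((0,∞),dt/t)}` of the interpolation space `(X,Y)_{θ,p}`. -/
def interpNorm (θ : ℝ) (p : ℝ≥0∞) (z : Z) : ℝ≥0∞ :=
  eLpNorm (fun t : ℝ => t ^ (-θ) * C.K t z) p mustar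

/-- The interpolation space `(X,Y)_{θ,p}`, as a subset of `Z`. -/
def interpSet (θ : ℝ) (p : ℝ≥0∞) : Set Z :=
  {z ∈ C.sum | C.interpNorm θ p z < ⊤}

/-- The swapped couple `Y, X`. -/
def swap : InterpCouple Y X Z where
  iX := C.iY
  iY := C.iX
  injX := C.injY
  injY := C.injX
  contX := C.contY
  contY := C.contX

end InterpCouple

/-! A decomposition `z = a + b` is carried by `T` to `Tz = T a + T b`, so
`K(t, Tz) ≤ c₁ K((c₂/c₁) t, z)`. The measure `dt/t` is invariant under dilations, hence the
weighted norm of `t ↦ t^{-θ} K(t, Tz)` is at most `c₁ (c₂/c₁)^θ = c₁^{1-θ} c₂^θ` times that of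
`z`. When `c₁` or `c₂` vanishes, apply this to `c₁ + ε`, `c₂ + ε` and let `ε → 0`. -/

open Filter Topology

namespace InterpCouple

theorem mustar_apply {s : Set ℝ} (hs : MeasurableSet s) :
    mustar s = ∫⁻ t in s ∩ Set.Ioi 0, ENNReal.ofReal t⁻¹ := by
  rw [mustar, withDensity_apply _ hs, Measure.restrict_restrict hs]

theorem ae_pos_mustar : ∀ᵐ t ∂mustar, 0 < t :=
  (withDensity_absolutelyContinuous _ _).ae_le (ae_restrict_mem measurableSet_Ioi)

theorem map_const_mul_mustar {l : ℝ} (hl : 0 < l) : mustar.map (l * ·) = mustar := by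
  ext s hs
  have hmul : Measurable (l * · : ℝ → ℝ) := measurable_const_mul l
  have hpre : MeasurableSet ((l * ·) ⁻¹' s ∩ Set.Ioi 0) := (hmul hs).inter measurableSet_Ioi
  have himage : (l * ·) '' ((l * ·) ⁻¹' s ∩ Set.Ioi 0) = s ∩ Set.Ioi 0 := by
    rw [Set.image_preimage_inter, Set.image_mul_left_Ioi hl, mul_zero]
  rw [Measure.map_apply hmul hs, mustar_apply (hmul hs), mustar_apply hs, ← himage,
    lintegral_image_eq_lintegral_abs_deriv_mul hpre
      (fun t _ => (hasDerivAt_id' t).const_mul l |>.hasDerivWithinAt)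
      (mul_right_injective₀ hl.ne').injOn]
  refine setLIntegral_congr_fun hpre fun t _ => ?_
  rw [mul_one, abs_of_pos hl, ← ENNReal.ofReal_mul hl.le, mul_inv, ← mul_assoc,
    mul_inv_cancel₀ hl.ne', one_mul]

theorem eLpNorm_comp_const_mul_mustar {l : ℝ} (hl : 0 < l) (g : ℝ → ℝ) (p : ℝ≥0∞) :
    eLpNorm (fun t => g (l * t)) p mustar = eLpNorm g p mustar := by
  conv_rhs => rw [← map_const_mul_mustar hl]
  exact ((Homeomorph.mulLeft₀ l hl.ne').measurableEmbedding.eLpNorm_map_measure).symm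

variable {X Y Z : Type*} [NormedAddCommGroup X] [NormedSpace ℝ X]
  [NormedAddCommGroup Y] [NormedSpace ℝ Y]
  [AddCommGroup Z] [Module ℝ Z] [TopologicalSpace Z]
  (C : InterpCouple X Y Z)

theorem K_nonneg {t : ℝ} (ht : 0 ≤ t) (z : Z) : 0 ≤ C.K t z :=
  Real.sInf_nonneg <| by rintro r ⟨a, b, -, rfl⟩; positivity

theorem K_le {t : ℝ} (ht : 0 ≤ t) {z : Z} {a : X} {b : Y} (hz : z = C.iX a + C.iY b) :
    C.K t z ≤ ‖a‖ + t * ‖b‖ :=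
  csInf_le ⟨0, by rintro r ⟨a, b, -, rfl⟩; positivity⟩ ⟨a, b, hz, rfl⟩

section Operator

variable {V W Z' : Type*} [NormedAddCommGroup V] [NormedSpace ℝ V]
  [NormedAddCommGroup W] [NormedSpace ℝ W]
  [AddCommGroup Z'] [Module ℝ Z'] [TopologicalSpace Z']
  {C} {C' : InterpCouple V W Z'} {T : Z →ₗ[ℝ] Z'} {TX : X →ₗ[ℝ] V} {TY : Y →ₗ[ℝ] W}
  (hTX : ∀ a, T (C.iX a) = C'.iX (TX a)) (hTY : ∀ b, T (C.iY b) = C'.iY (TY b))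
include hTX hTY

theorem map_eq_add_of_eq_add {z : Z} {a : X} {b : Y} (hz : z = C.iX a + C.iY b) :
    T z = C'.iX (TX a) + C'.iY (TY b) := by
  rw [hz, map_add, hTX, hTY]

theorem map_mem_sum {z : Z} (hz : z ∈ C.sum) : T z ∈ C'.sum :=
  let ⟨a, b, hab⟩ := hz
  ⟨TX a, TY b, map_eq_add_of_eq_add hTX hTY hab⟩

variable {c₁ c₂ : ℝ} (hTXb : ∀ a, ‖TX a‖ ≤ c₁ * ‖a‖) (hTYb : ∀ b, ‖TY b‖ ≤ c₂ * ‖b‖)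
include hTXb hTYb

theorem K_map_le (hc₁ : 0 < c₁) {t : ℝ} (ht : 0 ≤ t) {z : Z} (hz : z ∈ C.sum) :
    C'.K t (T z) ≤ c₁ * C.K (c₂ / c₁ * t) z := by
  obtain ⟨a₀, b₀, hz₀⟩ := hz
  rw [← div_le_iff₀' hc₁]
  refine le_csInf ⟨_, a₀, b₀, hz₀, rfl⟩ ?_
  rintro _ ⟨a, b, hab, rfl⟩
  rw [div_le_iff₀' hc₁]
  calc C'.K t (T z) ≤ ‖TX a‖ + t * ‖TY b‖ := C'.K_le ht (map_eq_add_of_eq_add hTX hTY hab)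
    _ ≤ c₁ * ‖a‖ + t * (c₂ * ‖b‖) :=
      add_le_add (hTXb a) (mul_le_mul_of_nonneg_left (hTYb b) ht)
    _ = c₁ * (‖a‖ + c₂ / c₁ * t * ‖b‖) := by field_simp

theorem interpNorm_map_le_of_pos (hc₁ : 0 < c₁) (hc₂ : 0 < c₂) (θ : ℝ) (p : ℝ≥0∞) {z : Z}
    (hz : z ∈ C.sum) :
    C'.interpNorm θ p (T z) ≤ ENNReal.ofReal (c₁ ^ (1 - θ) * c₂ ^ θ) * C.interpNorm θ p z := by
  set l := c₂ / c₁
  set c := c₁ ^ (1 - θ) * c₂ ^ θ with hc_def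
  have hl : 0 < l := div_pos hc₂ hc₁
  have hc : 0 < c := by positivity
  have hweight : ∀ t, 0 < t → t ^ (-θ) * c₁ = c * (l * t) ^ (-θ) := fun t ht => by
    rw [hc_def, Real.mul_rpow hl.le ht.le, Real.div_rpow hc₂.le hc₁.le, Real.rpow_sub hc₁,
      Real.rpow_one, Real.rpow_neg hc₂.le, Real.rpow_neg hc₁.le, Real.rpow_neg ht.le]
    field_simp
  calc C'.interpNorm θ p (T z)
      ≤ eLpNorm (c • fun t => (l * t) ^ (-θ) * C.K (l * t) z) p mustar := by
        refine eLpNorm_mono_ae ?_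
        filter_upwards [ae_pos_mustar] with t ht
        have hK := C.K_nonneg (mul_pos hl ht).le z
        rw [Real.norm_of_nonneg (by have := C'.K_nonneg ht.le (T z); positivity),
          Pi.smul_apply, Real.norm_of_nonneg (by positivity), smul_eq_mul, ← mul_assoc,
          ← hweight t ht, mul_assoc]
        gcongr
        exact K_map_le hTX hTY hTXb hTYb hc₁ ht.le hz
    _ = ENNReal.ofReal c * C.interpNorm θ p z := by
        rw [eLpNorm_const_smul, Real.enorm_of_nonneg hc.le,
          eLpNorm_comp_const_mul_mustar hl (fun s => s ^ (-θ) * C.K s z), interpNorm]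

theorem interpNorm_map_le (hc₁ : 0 ≤ c₁) (hc₂ : 0 ≤ c₂) {θ : ℝ} (hθ : θ ∈ Set.Icc (0 : ℝ) 1)
    (p : ℝ≥0∞) {z : Z} (hz : z ∈ C.sum) (hz_fin : C.interpNorm θ p z ≠ ⊤) :
    C'.interpNorm θ p (T z) ≤ ENNReal.ofReal (c₁ ^ (1 - θ) * c₂ ^ θ) * C.interpNorm θ p z := by
  let bound : ℝ → ℝ≥0∞ := fun ε =>
    ENNReal.ofReal ((c₁ + ε) ^ (1 - θ) * (c₂ + ε) ^ θ) * C.interpNorm θ p z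
  have hbound : ∀ ε > 0, C'.interpNorm θ p (T z) ≤ bound ε := fun ε hε =>
    interpNorm_map_le_of_pos hTX hTY
      (fun a => (hTXb a).trans (by gcongr; linarith))
      (fun b => (hTYb b).trans (by gcongr; linarith)) (by linarith) (by linarith) θ p hz
  have hcont : Continuous fun ε : ℝ => (c₁ + ε) ^ (1 - θ) * (c₂ + ε) ^ θ :=
    ((Real.continuous_rpow_const (by linarith [hθ.2])).comp (continuous_const_add c₁)).mul
      ((Real.continuous_rpow_const hθ.1).comp (continuous_const_add c₂))
  have hlim : Tendsto bound (𝓝[>] 0) (𝓝 (bound 0)) :=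
    (ENNReal.Tendsto.mul_const ((ENNReal.continuous_ofReal.comp hcont).tendsto 0)
      (Or.inr hz_fin)).mono_left nhdsWithin_le_nhds
  simpa only [bound, add_zero] using ge_of_tendsto hlim (eventually_nhdsWithin_of_forall hbound)

end Operator

end InterpCouple

theorem interp_operator_bound_general {X Y Z V W Z' : Type*}
    [NormedAddCommGroup X] [NormedSpace ℝ X] [NormedAddCommGroup Y] [NormedSpace ℝ Y]
    [AddCommGroup Z] [Module ℝ Z] [TopologicalSpace Z]
    [NormedAddCommGroup V] [NormedSpace ℝ V] [NormedAddCommGroup W] [NormedSpace ℝ W]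
    [AddCommGroup Z'] [Module ℝ Z'] [TopologicalSpace Z']
    (C : InterpCouple X Y Z) (C' : InterpCouple V W Z')
    (θ : ℝ) (hθ : θ ∈ Set.Ioo (0:ℝ) 1) (p : ℝ≥0∞)
    (Tmap : Z →ₗ[ℝ] Z') (TX : X →ₗ[ℝ] V) (TY : Y →ₗ[ℝ] W)
    (hTX : ∀ a, Tmap (C.iX a) = C'.iX (TX a)) (hTY : ∀ b, Tmap (C.iY b) = C'.iY (TY b))
    (c₁ c₂ : ℝ) (hc₁ : 0 ≤ c₁) (hc₂ : 0 ≤ c₂)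
    (hTXb : ∀ a, ‖TX a‖ ≤ c₁ * ‖a‖) (hTYb : ∀ b, ‖TY b‖ ≤ c₂ * ‖b‖) :
    ∀ z ∈ C.interpSet θ p, Tmap z ∈ C'.interpSet θ p ∧
      C'.interpNorm θ p (Tmap z)
        ≤ ENNReal.ofReal (c₁ ^ (1 - θ) * c₂ ^ θ) * C.interpNorm θ p z := by
  rintro z ⟨hz, hz_fin⟩
  have hbound := InterpCouple.interpNorm_map_le hTX hTY hTXb hTYb hc₁ hc₂
    (Set.Ioo_subset_Icc_self hθ) p hz hz_fin.ne
  have hfin := hbound.trans_lt (ENNReal.mul_lt_top ofReal_lt_top hz_fin)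
  exact ⟨⟨InterpCouple.map_mem_sum hTX hTY hz, hfin⟩, hbound⟩

/-- a linear operator `T : X + Y → V + W` whose restrictions `T|_X : X → V`
and `T|_Y : Y → W` are bounded (with bounds `c₁`, `c₂`) restricts to a bounded operator
`(X,Y)_{θ,p} → (V,W)_{θ,p}` with bound `c₁^{1-θ}·c₂^θ`. -/
theorem interp_operator_bound {X Y Z V W Z' : Type*}
    [NormedAddCommGroup X] [NormedSpace ℝ X] [NormedAddCommGroup Y] [NormedSpace ℝ Y]
    [CompleteSpace X] [CompleteSpace Y]
    [AddCommGroup Z] [Module ℝ Z] [TopologicalSpace Z] [T2Space Z]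
    [NormedAddCommGroup V] [NormedSpace ℝ V] [NormedAddCommGroup W] [NormedSpace ℝ W]
    [CompleteSpace V] [CompleteSpace W]
    [AddCommGroup Z'] [Module ℝ Z'] [TopologicalSpace Z'] [T2Space Z']
    (C : InterpCouple X Y Z) (C' : InterpCouple V W Z')
    (θ : ℝ) (hθ : θ ∈ Set.Ioo (0:ℝ) 1) (p : ℝ≥0∞) (hp : 1 ≤ p)
    (Tmap : Z →ₗ[ℝ] Z') (TX : X →ₗ[ℝ] V) (TY : Y →ₗ[ℝ] W)
    (hTX : ∀ a, Tmap (C.iX a) = C'.iX (TX a)) (hTY : ∀ b, Tmap (C.iY b) = C'.iY (TY b))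
    (c₁ c₂ : ℝ) (hc₁ : 0 ≤ c₁) (hc₂ : 0 ≤ c₂)
    (hTXb : ∀ a, ‖TX a‖ ≤ c₁ * ‖a‖) (hTYb : ∀ b, ‖TY b‖ ≤ c₂ * ‖b‖) :
    ∀ z ∈ C.interpSet θ p, Tmap z ∈ C'.interpSet θ p ∧
      C'.interpNorm θ p (Tmap z)
        ≤ ENNReal.ofReal (c₁ ^ (1 - θ) * c₂ ^ θ) * C.interpNorm θ p z :=
  interp_operator_bound_general C C' θ hθ p Tmap TX TY hTX hTY c₁ c₂ hc₁ hc₂ hTXb hTYb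
end
end

section
/- Let X be a quaternionic right Banach space and T : D(T) ⊆ X → X a closed right linear operator such that for some ω ∈ [0,π] the ray S_ω = {t·e^{iω} : t > 0, i ∈ 𝕊} lies in the S-resolvent set of T, and ‖Q_s(T)^{-1}‖ ≤ M/|s|² and ‖T·Q_s(T)^{-1}‖ ≤ M/|s| for all s ∈ S_ω. Then for all n, m ∈ ℕ₀ with n ≤ 2m and all s ∈ S_ω, ‖Tⁿ·Q_s(T)^{-m}‖ ≤ (1+3M)^m / |s|^{2m-n}. -/
/-!
The resolvent identity `Q_s(T) Q_s(T)⁻¹ = 1` gives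
`T² Q_s(T)⁻¹ = 1 + 2 Re(s) T Q_s(T)⁻¹ − |s|² Q_s(T)⁻¹`, so
`‖T^k Q_s(T)⁻¹‖ ≤ (1 + 3M) / |s|^{2-k}` for `k = 0, 1, 2`. Since `T` commutes with `Q_s(T)⁻¹`
on `D(T)` (this needs `T` to be real-linear on `D(T)`, which the closed graph provides), the
operator `Tⁿ Q_s(T)^{-m}` factors as a product of `m` such operators with `k₁ + ⋯ + k_m = n`,
and the bounds multiply.
-/

noncomputable section

open MulOpposite

local notation "ℍ" => Quaternion ℝ

/-- The domain `D(Tⁿ)` of the `n`-th power of an operator `T` with domain `D`: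
all `x` such that `x, Tx, …, T^{n-1}x ∈ D`. -/
def domN {X : Type*} [AddCommGroup X] [Module ℍᵐᵒᵖ X]
    (T : Module.End ℍᵐᵒᵖ X) (D : Set X) (n : ℕ) : Set X :=
  {x | ∀ j < n, (T ^ j) x ∈ D}

/-- The operator `Q_s(T) = T² − 2 Re(s) T + |s|²` for a quaternion `s`. -/
def Qs {X : Type*} [AddCommGroup X] [Module ℍᵐᵒᵖ X] [Module ℝ X]
    [SMulCommClass ℍᵐᵒᵖ ℝ X] (T : Module.End ℍᵐᵒᵖ X) (s : ℍ) : Module.End ℍᵐᵒᵖ X :=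
  T ^ 2 - (2 * s.re) • T + (‖s‖ ^ 2) • 1

/-- The operator `Q_{t e^{iω}}(T) = T² − 2 t cos(ω) T + t²` associated with the point
`t e^{iω}` of the ray `S_ω` (independent of the imaginary unit `i ∈ 𝕊`). -/
def Qray {X : Type*} [AddCommGroup X] [Module ℍᵐᵒᵖ X] [Module ℝ X]
    [SMulCommClass ℍᵐᵒᵖ ℝ X] (T : Module.End ℍᵐᵒᵖ X) (ω t : ℝ) : Module.End ℍᵐᵒᵖ X :=
  T ^ 2 - (2 * t * Real.cos ω) • T + (t ^ 2) • 1

/-- The real and `K`-actions agree on `ℚ`, which is dense in `ℝ`. -/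
theorem smul_mem_and_map_smul_of_isClosed_graph {K X Y : Type*} [DivisionRing K]
    [AddCommGroup X] [Module K X] [Module ℝ X] [TopologicalSpace X] [ContinuousSMul ℝ X]
    [AddCommGroup Y] [Module K Y] [Module ℝ Y] [TopologicalSpace Y] [ContinuousSMul ℝ Y]
    {T : X →ₗ[K] Y} {D : Submodule K X}
    (hclosed : IsClosed {p : X × Y | p.1 ∈ (D : Set X) ∧ T p.1 = p.2})
    (c : ℝ) {y : X} (hy : y ∈ D) : c • y ∈ D ∧ T (c • y) = c • T y := by
  refine Rat.denseRange_cast.induction_on (p := fun c : ℝ => (c • y, c • T y) ∈ _) c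
    (hclosed.preimage (by fun_prop)) fun q => ?_
  rw [ratCast_smul_eq ℝ K, ratCast_smul_eq ℝ K]
  exact ⟨D.smul_mem _ hy, map_smul T _ y⟩

section

variable {X : Type*} [AddCommGroup X] [Module ℍᵐᵒᵖ X] {T : Module.End ℍᵐᵒᵖ X} {D : Set X}

theorem mem_domN_succ {x : X} {k : ℕ} :
    x ∈ domN T D (k + 1) ↔ x ∈ D ∧ T x ∈ domN T D k := by
  have hpow (j : ℕ) : (T ^ (j + 1)) x = (T ^ j) (T x) := by
    rw [pow_succ, Module.End.mul_apply]
  constructor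
  · intro hx
    exact ⟨by simpa using hx 0 k.succ_pos, fun j hj => hpow j ▸ hx (j + 1) (by omega)⟩
  · rintro ⟨hx, hTx⟩ (_ | j) hj
    · simpa using hx
    · exact hpow j ▸ hTx j (by omega)

theorem mem_domN_two {x : X} : x ∈ domN T D 2 ↔ x ∈ D ∧ T x ∈ D := by
  rw [mem_domN_succ, mem_domN_succ]
  simp [domN]

theorem domN_anti {k l : ℕ} (hkl : k ≤ l) : domN T D l ⊆ domN T D k :=
  fun _ hx j hj => hx j (by omega)

end

section

variable {X : Type*} [NormedAddCommGroup X] [NormedSpace ℝ X] [Module ℍᵐᵒᵖ X]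
  [SMulCommClass ℍᵐᵒᵖ ℝ X] {T S : Module.End ℍᵐᵒᵖ X} {D : Submodule ℍᵐᵒᵖ X} {ω t : ℝ}

theorem Qray_apply (y : X) :
    Qray T ω t y = T (T y) - (2 * t * Real.cos ω) • T y + t ^ 2 • y := by
  simp [Qray, pow_two]

/-- `S` is the inverse `Q_s(T)⁻¹` of `Q_s(T) : D(T²) → X` for `s = t e^{iω}`. -/
structure IsQrayInverse (T : Module.End ℍᵐᵒᵖ X) (D : Submodule ℍᵐᵒᵖ X) (ω t : ℝ)
    (S : Module.End ℍᵐᵒᵖ X) : Prop where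
  mem_domN : ∀ x, S x ∈ domN T D 2
  right_inv : ∀ x, Qray T ω t (S x) = x
  left_inv : ∀ x ∈ domN T D 2, S (Qray T ω t x) = x

namespace IsQrayInverse

theorem apply_apply_eq (hS : IsQrayInverse T D ω t S) (x : X) :
    T (T (S x)) = x + (2 * t * Real.cos ω) • T (S x) - t ^ 2 • S x :=
  calc T (T (S x))
      = Qray T ω t (S x) + (2 * t * Real.cos ω) • T (S x) - t ^ 2 • S x := by
        rw [Qray_apply]; abel
    _ = x + (2 * t * Real.cos ω) • T (S x) - t ^ 2 • S x := by rw [hS.right_inv]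

theorem apply_comm (hS : IsQrayInverse T D ω t S)
    (hclosed : IsClosed {p : X × X | p.1 ∈ (D : Set X) ∧ T p.1 = p.2}) {z : X} (hz : z ∈ D) :
    T (S z) = S (T z) := by
  obtain ⟨hSz, hTSz⟩ := mem_domN_two.1 (hS.mem_domN z)
  have hsmul := smul_mem_and_map_smul_of_isClosed_graph hclosed
  have hTTSz : T (T (S z)) ∈ D := by
    rw [hS.apply_apply_eq z]
    exact D.sub_mem (D.add_mem hz (hsmul _ hTSz).1) (hsmul _ hSz).1
  have hQ : Qray T ω t (T (S z)) = T z := by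
    have hTTTSz : T (T (T (S z))) =
        T z + (2 * t * Real.cos ω) • T (T (S z)) - t ^ 2 • T (S z) := by
      conv_lhs => rw [hS.apply_apply_eq z]
      rw [map_sub, map_add, (hsmul _ hTSz).2, (hsmul _ hSz).2]
    rw [Qray_apply, hTTTSz]
    abel
  -- `S (T z) - T (S z)` lies in `D(T²)` and is annihilated by `Q_s(T)`, which is injective there.
  have hdiff : S (T z) - T (S z) ∈ domN T D 2 := by
    obtain ⟨h₁, h₂⟩ := mem_domN_two.1 (hS.mem_domN (T z))
    exact mem_domN_two.2 ⟨D.sub_mem h₁ hTSz, by rw [map_sub]; exact D.sub_mem h₂ hTTSz⟩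
  have h := hS.left_inv _ hdiff
  rw [map_sub, hS.right_inv, hQ, sub_self, map_zero] at h
  exact (sub_eq_zero.1 h.symm).symm

theorem apply_pow_comm (hS : IsQrayInverse T D ω t S)
    (hclosed : IsClosed {p : X × X | p.1 ∈ (D : Set X) ∧ T p.1 = p.2}) (m : ℕ) {y : X}
    (hy : y ∈ D) : T ((S ^ m) y) = (S ^ m) (T y) := by
  induction m generalizing y with
  | zero => rfl
  | succ m ih =>
    rw [pow_succ, Module.End.mul_apply, Module.End.mul_apply,
      ih (mem_domN_two.1 (hS.mem_domN y)).1, hS.apply_comm hclosed hy]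

theorem pow_apply_pow_comm (hS : IsQrayInverse T D ω t S)
    (hclosed : IsClosed {p : X × X | p.1 ∈ (D : Set X) ∧ T p.1 = p.2}) (k m : ℕ) {y : X}
    (hy : y ∈ domN T D k) : (T ^ k) ((S ^ m) y) = (S ^ m) ((T ^ k) y) := by
  induction k generalizing y with
  | zero => rfl
  | succ k ih =>
    obtain ⟨hyD, hTy⟩ := mem_domN_succ.1 hy
    simp only [pow_succ, Module.End.mul_apply]
    rw [hS.apply_pow_comm hclosed m hyD, ih hTy]

theorem norm_apply_apply_le (hS : IsQrayInverse T D ω t S) {M : ℝ} (ht : 0 < t)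
    (hS₁ : ∀ x, ‖S x‖ ≤ M / t ^ 2 * ‖x‖) (hS₂ : ∀ x, ‖T (S x)‖ ≤ M / t * ‖x‖) (x : X) :
    ‖T (T (S x))‖ ≤ (1 + 3 * M) * ‖x‖ := by
  have h₁ : t ^ 2 * ‖S x‖ ≤ M * ‖x‖ := by
    have := hS₁ x
    rw [div_mul_eq_mul_div, le_div_iff₀ (by positivity)] at this
    linarith
  have h₂ : t * ‖T (S x)‖ ≤ M * ‖x‖ := by
    have := hS₂ x
    rw [div_mul_eq_mul_div, le_div_iff₀ ht] at this
    linarith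
  have hcos : t * |Real.cos ω| * ‖T (S x)‖ ≤ t * ‖T (S x)‖ := by
    have := Real.abs_cos_le_one ω
    have : 0 ≤ t * ‖T (S x)‖ := by positivity
    nlinarith
  calc ‖T (T (S x))‖
      ≤ ‖x‖ + ‖(2 * t * Real.cos ω) • T (S x)‖ + ‖t ^ 2 • S x‖ := by
        rw [hS.apply_apply_eq]
        exact norm_sub_le_of_le (norm_add_le _ _) le_rfl
    _ = ‖x‖ + 2 * (t * |Real.cos ω| * ‖T (S x)‖) + t ^ 2 * ‖S x‖ := by
        simp only [norm_smul, Real.norm_eq_abs, abs_mul, abs_two, abs_pow, abs_of_pos ht]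
        ring
    _ ≤ (1 + 3 * M) * ‖x‖ := by linarith

theorem norm_pow_apply_le (hS : IsQrayInverse T D ω t S) {M : ℝ} (hM : 0 ≤ M) (ht : 0 < t)
    (hS₁ : ∀ x, ‖S x‖ ≤ M / t ^ 2 * ‖x‖) (hS₂ : ∀ x, ‖T (S x)‖ ≤ M / t * ‖x‖)
    {k : ℕ} (hk : k ≤ 2) (x : X) :
    ‖(T ^ k) (S x)‖ ≤ (1 + 3 * M) / t ^ (2 - k) * ‖x‖ := by
  interval_cases k
  · exact (hS₁ x).trans (by gcongr; linarith)
  · simpa using (hS₂ x).trans (by gcongr; linarith : M / t * ‖x‖ ≤ (1 + 3 * M) / t * ‖x‖)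
  · simpa [pow_two] using hS.norm_apply_apply_le ht hS₁ hS₂ x

theorem norm_pow_apply_pow_le (hS : IsQrayInverse T D ω t S)
    (hclosed : IsClosed {p : X × X | p.1 ∈ (D : Set X) ∧ T p.1 = p.2}) (ht : 0 ≤ t)
    {K : ℝ} (hK : 0 ≤ K) (hstep : ∀ k ≤ 2, ∀ x, ‖(T ^ k) (S x)‖ ≤ K / t ^ (2 - k) * ‖x‖)
    (m n : ℕ) (hn : n ≤ 2 * m) (x : X) :
    ‖(T ^ n) ((S ^ m) x)‖ ≤ K ^ m / t ^ (2 * m - n) * ‖x‖ := by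
  induction m generalizing n x with
  | zero =>
    obtain rfl : n = 0 := by omega
    simp
  | succ m ih =>
    -- Move `k = min n 2` of the `n` factors `T` onto the innermost `S`.
    set k := min n 2
    have hk : k ≤ 2 := min_le_right n 2
    have hsplit : (T ^ n) ((S ^ (m + 1)) x) = (T ^ (n - k)) ((S ^ m) ((T ^ k) (S x))) := by
      rw [← hS.pow_apply_pow_comm hclosed k m (domN_anti hk (hS.mem_domN x)),
        ← Module.End.mul_apply (T ^ (n - k)), ← pow_add, Nat.sub_add_cancel (min_le_left n 2),
        pow_succ S, Module.End.mul_apply]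
    calc ‖(T ^ n) ((S ^ (m + 1)) x)‖
        = ‖(T ^ (n - k)) ((S ^ m) ((T ^ k) (S x)))‖ := by rw [hsplit]
      _ ≤ K ^ m / t ^ (2 * m - (n - k)) * ‖(T ^ k) (S x)‖ := ih _ (by omega) _
      _ ≤ K ^ m / t ^ (2 * m - (n - k)) * (K / t ^ (2 - k) * ‖x‖) := by
        gcongr
        exact hstep k hk x
      _ = K ^ (m + 1) / t ^ (2 * (m + 1) - n) * ‖x‖ := by
        rw [show 2 * (m + 1) - n = (2 * m - (n - k)) + (2 - k) by omega, pow_add, pow_succ]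
        ring

end IsQrayInverse

end

theorem pow_pseudoResolvent_bound_general
    {X : Type*} [NormedAddCommGroup X] [NormedSpace ℝ X]
    [Module ℍᵐᵒᵖ X] [SMulCommClass ℍᵐᵒᵖ ℝ X]
    -- `T` is a closed right linear operator with domain `D`
    (T : Module.End ℍᵐᵒᵖ X) (D : Submodule ℍᵐᵒᵖ X)
    (hclosed : IsClosed {p : X × X | p.1 ∈ (D : Set X) ∧ T p.1 = p.2})
    -- the ray `S_ω` lies in the S-resolvent set, with pseudo-resolvents `R t = Q_{te^{iω}}(T)⁻¹`
    (ω : ℝ)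
    (M : ℝ) (hM : 0 ≤ M)
    (R : ℝ → Module.End ℍᵐᵒᵖ X)
    (hRdom : ∀ t > 0, ∀ x : X, R t x ∈ domN T (D : Set X) 2)
    (hQR : ∀ t > 0, ∀ x : X, Qray T ω t (R t x) = x)
    (hRQ : ∀ t > 0, ∀ x ∈ domN T (D : Set X) 2, R t (Qray T ω t x) = x)
    -- the resolvent bounds `‖Q_s⁻¹‖ ≤ M/|s|²` and `‖T Q_s⁻¹‖ ≤ M/|s|` on `S_ω`
    (hR1 : ∀ t > 0, ∀ x : X, ‖R t x‖ ≤ M / t ^ 2 * ‖x‖)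
    (hR2 : ∀ t > 0, ∀ x : X, ‖T (R t x)‖ ≤ M / t * ‖x‖)
    :
    ∀ (n m : ℕ), n ≤ 2 * m → ∀ t > 0, ∀ x : X,
      ‖(T ^ n) (((R t) ^ m) x)‖ ≤ (1 + 3 * M) ^ m / t ^ (2 * m - n) * ‖x‖ := by
  intro n m hnm t ht x
  have hR : IsQrayInverse T D ω t (R t) := ⟨hRdom t ht, hQR t ht, hRQ t ht⟩
  exact hR.norm_pow_apply_pow_le hclosed ht.le (by positivity)
    (fun k hk => hR.norm_pow_apply_le hM ht (hR1 t ht) (hR2 t ht) hk) m n hnm x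

/-- `‖Tⁿ Q_s(T)^{-m}‖ ≤ (1+3M)^m / |s|^{2m-n}` for `n ≤ 2m` and `s ∈ S_ω`. -/
theorem pow_pseudoResolvent_bound
    {X : Type*} [NormedAddCommGroup X] [NormedSpace ℝ X] [CompleteSpace X]
    [Module ℍᵐᵒᵖ X] [SMulCommClass ℍᵐᵒᵖ ℝ X]
    -- right Banach space: `‖x·s‖ = ‖x‖·|s|`
    (hnorm : ∀ (x : X) (s : ℍ), ‖(op s) • x‖ = ‖x‖ * ‖s‖)
    -- `T` is a closed right linear operator with domain `D`
    (T : Module.End ℍᵐᵒᵖ X) (D : Submodule ℍᵐᵒᵖ X)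
    (hclosed : IsClosed {p : X × X | p.1 ∈ (D : Set X) ∧ T p.1 = p.2})
    -- the ray `S_ω` lies in the S-resolvent set, with pseudo-resolvents `R t = Q_{te^{iω}}(T)⁻¹`
    (ω : ℝ) (hω : ω ∈ Set.Icc (0:ℝ) Real.pi)
    (M : ℝ) (hM : 0 ≤ M)
    (R : ℝ → Module.End ℍᵐᵒᵖ X)
    (hRcont : ∀ t > 0, Continuous (R t))
    (hRdom : ∀ t > 0, ∀ x : X, R t x ∈ domN T (D : Set X) 2)
    (hQR : ∀ t > 0, ∀ x : X, Qray T ω t (R t x) = x)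
    (hRQ : ∀ t > 0, ∀ x ∈ domN T (D : Set X) 2, R t (Qray T ω t x) = x)
    -- the resolvent bounds `‖Q_s⁻¹‖ ≤ M/|s|²` and `‖T Q_s⁻¹‖ ≤ M/|s|` on `S_ω`
    (hR1 : ∀ t > 0, ∀ x : X, ‖R t x‖ ≤ M / t ^ 2 * ‖x‖)
    (hR2 : ∀ t > 0, ∀ x : X, ‖T (R t x)‖ ≤ M / t * ‖x‖)
    :
    ∀ (n m : ℕ), n ≤ 2 * m → ∀ t > 0, ∀ x : X,
      ‖(T ^ n) (((R t) ^ m) x)‖ ≤ (1 + 3 * M) ^ m / t ^ (2 * m - n) * ‖x‖ :=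
  pow_pseudoResolvent_bound_general T D hclosed ω M hM R hRdom hQR hRQ hR1 hR2
end
end

section
/- Let T be a closed right linear operator on a quaternionic Banach space X with a ray S_ω in its S-resolvent set and resolvent bounds ‖Q_s(T)^{-1}‖ ≤ M/|s|², ‖T·Q_s(T)^{-1}‖ ≤ M/|s| on S_ω. Then for every n ≤ m ∈ ℕ₀ there is a continuous embedding D(T^m) ↪ D(Tⁿ); more precisely, for every 0 ≠ s ∈ ρ_S(T) ∩ S_ω and x ∈ D(T^m), ‖Tⁿx‖ ≤ (4+12M)^m·|s|ⁿ·‖x‖ + (4+12M)^m·|s|^{n−m}·‖T^m x‖. -/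
noncomputable section

open MulOpposite

local notation "ℍ" => Quaternion ℝ

set_option maxHeartbeats 3200000

/-- the continuous embedding `D(T^m) ↪ D(Tⁿ)` for `n ≤ m`, with the explicit
bound `‖Tⁿx‖ ≤ (4+12M)^m |s|ⁿ ‖x‖ + (4+12M)^m |s|^{n-m} ‖T^m x‖` for `s = te^{iω} ∈ S_ω`. -/
theorem dom_pow_embedding
    {X : Type*} [NormedAddCommGroup X] [NormedSpace ℝ X] [CompleteSpace X]
    [Module ℍᵐᵒᵖ X] [SMulCommClass ℍᵐᵒᵖ ℝ X]
    -- right Banach space: `‖x·s‖ = ‖x‖·|s|`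
    (hnorm : ∀ (x : X) (s : ℍ), ‖(op s) • x‖ = ‖x‖ * ‖s‖)
    -- `T` is a closed right linear operator with domain `D`
    (T : Module.End ℍᵐᵒᵖ X) (D : Submodule ℍᵐᵒᵖ X)
    (hclosed : IsClosed {p : X × X | p.1 ∈ (D : Set X) ∧ T p.1 = p.2})
    -- the ray `S_ω` lies in the S-resolvent set, with pseudo-resolvents `R t = Q_{te^{iω}}(T)⁻¹`
    (ω : ℝ) (hω : ω ∈ Set.Icc (0:ℝ) Real.pi)
    (M : ℝ) (hM : 0 ≤ M)
    (R : ℝ → Module.End ℍᵐᵒᵖ X)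
    (hRcont : ∀ t > 0, Continuous (R t))
    (hRdom : ∀ t > 0, ∀ x : X, R t x ∈ domN T (D : Set X) 2)
    (hQR : ∀ t > 0, ∀ x : X, Qray T ω t (R t x) = x)
    (hRQ : ∀ t > 0, ∀ x ∈ domN T (D : Set X) 2, R t (Qray T ω t x) = x)
    -- the resolvent bounds `‖Q_s⁻¹‖ ≤ M/|s|²` and `‖T Q_s⁻¹‖ ≤ M/|s|` on `S_ω`
    (hR1 : ∀ t > 0, ∀ x : X, ‖R t x‖ ≤ M / t ^ 2 * ‖x‖)
    (hR2 : ∀ t > 0, ∀ x : X, ‖T (R t x)‖ ≤ M / t * ‖x‖)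
    :
    ∀ (n m : ℕ), n ≤ m →
      domN T (D : Set X) m ⊆ domN T (D : Set X) n ∧
      ∀ t > 0, ∀ x ∈ domN T (D : Set X) m,
        ‖(T ^ n) x‖ ≤ (4 + 12 * M) ^ m * t ^ n * ‖x‖
          + (4 + 12 * M) ^ m / t ^ (m - n) * ‖(T ^ m) x‖ := by
    -- abbreviations and basic algebraic facts about powers
  have hpow2 : ∀ v : X, (T ^ 2) v = T (T v) := by
    intro v; rw [pow_two]; rfl
  have hpowsucc : ∀ (j : ℕ) (v : X), (T ^ (j + 1)) v = (T ^ j) (T v) := by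
    intro j v; rw [pow_succ]; rfl
  have hpowsucc' : ∀ (j : ℕ) (v : X), (T ^ (j + 1)) v = T ((T ^ j) v) := by
    intro j v; rw [pow_succ']; rfl
  have hpowadd : ∀ (i j : ℕ) (v : X), (T ^ (i + j)) v = (T ^ i) ((T ^ j) v) := by
    intro i j v; rw [pow_add]; rfl
  have hQray_apply : ∀ (t : ℝ) (z : X),
      Qray T ω t z = (T ^ 2) z - (2 * t * Real.cos ω) • T z + (t ^ 2 : ℝ) • z := by
    intro t z
    simp [Qray, LinearMap.sub_apply, LinearMap.add_apply, LinearMap.smul_apply,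
      Module.End.one_apply]
  -- real-linearity of R t (continuity + additivity)
  have hRsmul : ∀ t : ℝ, 0 < t → ∀ (a : ℝ) (z : X), R t (a • z) = a • R t z := by
    intro t ht a z
    have hcont : Continuous ⇑(R t).toAddMonoidHom := hRcont t ht
    exact map_real_smul (R t).toAddMonoidHom hcont a z
  -- real-linearity of T ∘ R t (boundedness + additivity)
  have hTRsmul : ∀ t : ℝ, 0 < t → ∀ (a : ℝ) (z : X), T (R t (a • z)) = a • T (R t z) := by
    intro t ht a z
    have hcont : Continuous ⇑(T.toAddMonoidHom.comp (R t).toAddMonoidHom) :=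
      AddMonoidHomClass.continuous_of_bound (T.toAddMonoidHom.comp (R t).toAddMonoidHom)
        (M / t) (fun w => hR2 t ht w)
    exact map_real_smul (T.toAddMonoidHom.comp (R t).toAddMonoidHom) hcont a z
  -- the fundamental identity x = T²Rx - c•TRx + t²•Rx
  have hxid : ∀ t : ℝ, 0 < t → ∀ z : X,
      z = (T ^ 2) (R t z) - (2 * t * Real.cos ω) • T (R t z) + (t ^ 2 : ℝ) • R t z := by
    intro t ht z
    have h := hQR t ht z
    rw [hQray_apply] at h
    exact h.symm
  have hT2R : ∀ t : ℝ, 0 < t → ∀ z : X,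
      (T ^ 2) (R t z)
        = z + (2 * t * Real.cos ω) • T (R t z) - (t ^ 2 : ℝ) • R t z := by
    intro t ht z
    have h := hxid t ht z
    have h2 : (T ^ 2) (R t z)
        = ((T ^ 2) (R t z) - (2 * t * Real.cos ω) • T (R t z) + (t ^ 2 : ℝ) • R t z)
          + (2 * t * Real.cos ω) • T (R t z) - (t ^ 2 : ℝ) • R t z := by abel
    rw [← h] at h2
    exact h2
  -- real-linearity of T² ∘ R t
  have hT2Rsmul : ∀ t : ℝ, 0 < t → ∀ (a : ℝ) (z : X),
      (T ^ 2) (R t (a • z)) = a • (T ^ 2) (R t z) := by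
    intro t ht a z
    rw [hT2R t ht (a • z), hTRsmul t ht a z, hRsmul t ht a z, hT2R t ht z,
      smul_sub, smul_add, smul_comm a (2 * t * Real.cos ω), smul_comm a (t ^ 2 : ℝ)]
  -- basic membership facts
  have hD0 : ∀ t : ℝ, 0 < t → ∀ z : X, R t z ∈ (D : Set X) := by
    intro t ht z
    have h := hRdom t ht z 0 (by norm_num)
    simpa using h
  have hD1 : ∀ t : ℝ, 0 < t → ∀ z : X, T (R t z) ∈ (D : Set X) := by
    intro t ht z
    have h := hRdom t ht z 1 (by norm_num)
    simpa using h
  have hmono : ∀ {k l : ℕ}, k ≤ l → domN T (D : Set X) l ⊆ domN T (D : Set X) k :=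
    fun {k l} hkl x hx j hj => hx j (lt_of_lt_of_le hj hkl)
  have hTdom : ∀ (k : ℕ) (x : X), x ∈ domN T (D : Set X) (k + 1) →
      T x ∈ domN T (D : Set X) k := by
    intro k x hx j hj
    have h := hx (j + 1) (by omega)
    rw [hpowsucc j x] at h
    exact h
  have hmem0 : ∀ (k : ℕ) (x : X), x ∈ domN T (D : Set X) k → 0 < k → x ∈ (D : Set X) := by
    intro k x hx hk
    have h := hx 0 hk
    simpa using h
  -- T (R t x) ∈ domN 2 for x ∈ D
  have hTRdom2 : ∀ t : ℝ, 0 < t → ∀ x : X, x ∈ (D : Set X) →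
      T (R t x) ∈ domN T (D : Set X) 2 := by
    intro t ht x hx j hj
    interval_cases j
    · simpa using hD1 t ht x
    · have e : (T ^ 1) (T (R t x))
          = x + T (R t ((2 * t * Real.cos ω) • x)) - R t ((t ^ 2 : ℝ) • x) := by
        rw [pow_one, ← hpow2, hT2R t ht x, hTRsmul t ht, hRsmul t ht]
      rw [e]
      exact D.sub_mem (D.add_mem hx (hD1 t ht _)) (hD0 t ht _)
  -- commutation R T = T R on D
  have hcomm : ∀ t : ℝ, 0 < t → ∀ x : X, x ∈ (D : Set X) → R t (T x) = T (R t x) := by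
    intro t ht x hx
    have hu : T (R t x) ∈ domN T (D : Set X) 2 := hTRdom2 t ht x hx
    have hq : Qray T ω t (T (R t x)) = T x := by
      rw [hQray_apply]
      have hx2 : x = (T ^ 2) (R t x) - T (R t ((2 * t * Real.cos ω) • x))
          + R t ((t ^ 2 : ℝ) • x) := by
        have h := hxid t ht x
        rw [← hTRsmul t ht, ← hRsmul t ht] at h
        exact h
      have hTx := congrArg (⇑T) hx2
      rw [map_add, map_sub] at hTx
      rw [← hpow2, hT2Rsmul t ht, hTRsmul t ht] at hTx
      have e2 : (T ^ 2) (T (R t x)) = T ((T ^ 2) (R t x)) := by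
        rw [hpow2 (T (R t x)), hpow2 (R t x)]
      rw [← hpow2, e2]
      exact hTx.symm
    have h := hRQ t ht (T (R t x)) hu
    rw [hq] at h
    exact h
  -- iterated commutation
  have hcommN : ∀ t : ℝ, 0 < t → ∀ (j k : ℕ) (x : X), x ∈ domN T (D : Set X) k → j ≤ k →
      (T ^ j) (R t x) = R t ((T ^ j) x) := by
    intro t ht j
    induction j with
    | zero => intro k x hx _; simp
    | succ j ih =>
      intro k x hx hj
      obtain ⟨k', rfl⟩ : ∃ k', k = k' + 1 := ⟨k - 1, by omega⟩
      rw [hpowsucc j (R t x), ← hcomm t ht x (hmem0 _ x hx (by omega)),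
        ih k' (T x) (hTdom k' x hx) (by omega), ← hpowsucc j x]
  -- R maps domN k into domN (k+2)
  have hRdomN : ∀ t : ℝ, 0 < t → ∀ (k : ℕ) (x : X), x ∈ domN T (D : Set X) k →
      R t x ∈ domN T (D : Set X) (k + 2) := by
    intro t ht k x hx j hj
    rcases Nat.lt_or_ge j (k + 1) with h | h
    · rw [hcommN t ht j k x hx (by omega)]
      exact hD0 t ht _
    · have hj1 : j = k + 1 := by omega
      subst hj1
      rw [hpowsucc' k (R t x), hcommN t ht k k x hx le_rfl]
      exact hD1 t ht _
  -- T commutes with real scalars on domN 2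
  have hsmulT : ∀ (a : ℝ) (x : X), x ∈ domN T (D : Set X) 2 → T (a • x) = a • T x := by
    intro a x hx
    have h1 : R 1 (Qray T ω 1 x) = x := hRQ 1 one_pos x hx
    calc T (a • x) = T (a • R 1 (Qray T ω 1 x)) := by rw [h1]
      _ = T (R 1 (a • Qray T ω 1 x)) := by rw [hRsmul 1 one_pos]
      _ = a • T (R 1 (Qray T ω 1 x)) := by rw [hTRsmul 1 one_pos]
      _ = a • T x := by rw [h1]
  have hsmulpow : ∀ (j k : ℕ) (x : X) (a : ℝ), x ∈ domN T (D : Set X) k → j + 2 ≤ k →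
      (T ^ j) (a • x) = a • (T ^ j) x := by
    intro j
    induction j with
    | zero => intro k x a _ _; simp only [pow_zero, Module.End.one_apply]
    | succ j ih =>
      intro k x a hx hk
      obtain ⟨k', rfl⟩ : ∃ k', k = k' + 1 := ⟨k - 1, by omega⟩
      rw [hpowsucc j (a • x), hsmulT a x (hmono (by omega) hx),
        ih k' (T x) a (hTdom k' x hx) (by omega), ← hpowsucc j x]
  -- numeric facts
  have hC1 : (1 : ℝ) ≤ 4 + 12 * M := by linarith
  have hC0 : (0 : ℝ) < 4 + 12 * M := by linarith
  have hcosb : ∀ t : ℝ, 0 < t → |2 * t * Real.cos ω| ≤ 2 * t := by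
    intro t ht
    calc |2 * t * Real.cos ω| = |2 * t| * |Real.cos ω| := abs_mul _ _
      _ ≤ |2 * t| * 1 := by
          have h := Real.abs_cos_le_one ω
          nlinarith [abs_nonneg (2 * t)]
      _ = 2 * t := by rw [mul_one, abs_of_pos (by linarith)]
  -- the main induction
  have key : ∀ (m : ℕ) (x : X), x ∈ domN T (D : Set X) m → ∀ t : ℝ, 0 < t → ∀ n : ℕ, n ≤ m →
      ‖(T ^ n) x‖ ≤ (4 + 12 * M) ^ m * t ^ n * ‖x‖
        + (4 + 12 * M) ^ m / t ^ (m - n) * ‖(T ^ m) x‖ := by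
    intro m
    induction m with
    | zero =>
      intro x _ t ht n hn
      obtain rfl : n = 0 := Nat.le_zero.mp hn
      simp only [pow_zero, Nat.sub_self, one_mul, div_one, Module.End.one_apply]
      linarith [norm_nonneg x]
    | succ m IH =>
      intro x hx t ht n hn
      have htne : t ≠ 0 := ne_of_gt ht
      have hCp : (1 : ℝ) ≤ (4 + 12 * M) ^ (m + 1) := one_le_pow₀ hC1
      rcases Nat.lt_or_ge n (m + 1) with hnm | hnm
      · rcases Nat.eq_zero_or_pos n with rfl | hn1
        · simp only [pow_zero, Nat.sub_zero, Module.End.one_apply, mul_one]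
          have h2 : 0 ≤ (4 + 12 * M) ^ (m + 1) / t ^ (m + 1) * ‖(T ^ (m + 1)) x‖ :=
            mul_nonneg (div_nonneg (pow_nonneg hC0.le _) (pow_nonneg ht.le _)) (norm_nonneg _)
          nlinarith [norm_nonneg x]
        · -- main case : 1 ≤ n ≤ m
          obtain ⟨p, rfl⟩ : ∃ p, n = p + 1 := ⟨n - 1, by omega⟩
          obtain ⟨k, rfl⟩ : ∃ k, m = p + 1 + k := ⟨m - (p + 1), by omega⟩
          -- memberships
          have hyD : R t x ∈ domN T (D : Set X) (p + 1 + k + 1 + 2) := hRdomN t ht _ x hx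
          have hyD' : R t x ∈ domN T (D : Set X) (p + 1 + k + 1 + 1 + 1) :=
            hmono (by omega) hyD
          have hTyD : T (R t x) ∈ domN T (D : Set X) (p + 1 + k + 1 + 1) :=
            hTdom _ _ hyD'
          have hTy_m : T (R t x) ∈ domN T (D : Set X) (p + 1 + k) := hmono (by omega) hTyD
          have hT2y : (T ^ 2) (R t x) ∈ domN T (D : Set X) (p + 1 + k) := by
            have h1 : T (T (R t x)) ∈ domN T (D : Set X) (p + 1 + k + 1) :=
              hTdom _ _ hTyD
            have h2 : T (T (R t x)) ∈ domN T (D : Set X) (p + 1 + k) := hmono (by omega) h1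
            rw [hpow2 (R t x)]
            exact h2
          -- instantiate the induction hypothesis
          have ek1 : p + 1 + k - (p + 1) = k := by omega
          have ek2 : p + 1 + k - p = k + 1 := by omega
          have A1 := IH ((T ^ 2) (R t x)) hT2y t ht (p + 1) (by omega)
          have A2 := IH (T (R t x)) hTy_m t ht (p + 1) (by omega)
          have A3 := IH (T (R t x)) hTy_m t ht p (by omega)
          rw [ek1] at A1 A2
          rw [ek2] at A3
          -- norm bounds for the resolvent expressions
          have hz0 : ‖(T ^ 2) (R t x)‖ ≤ (1 + 3 * M) * ‖x‖ := by
            rw [hT2R t ht x]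
            have n1 := norm_add_le x ((2 * t * Real.cos ω) • T (R t x))
            have n2 := norm_sub_le (x + (2 * t * Real.cos ω) • T (R t x))
              ((t ^ 2 : ℝ) • R t x)
            have n3 : ‖(2 * t * Real.cos ω) • T (R t x)‖
                = |2 * t * Real.cos ω| * ‖T (R t x)‖ := by
              rw [norm_smul, Real.norm_eq_abs]
            have n4 : ‖(t ^ 2 : ℝ) • R t x‖ = t ^ 2 * ‖R t x‖ := by
              rw [norm_smul, Real.norm_eq_abs, abs_of_pos (pow_pos ht 2)]
            have h1 := hR2 t ht x
            have h2 := hR1 t ht x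
            have h3 := hcosb t ht
            have h4 : |2 * t * Real.cos ω| * ‖T (R t x)‖ ≤ (2 * t) * (M / t * ‖x‖) :=
              mul_le_mul h3 h1 (norm_nonneg _) (by linarith)
            have h5 : t ^ 2 * ‖R t x‖ ≤ t ^ 2 * (M / t ^ 2 * ‖x‖) :=
              mul_le_mul_of_nonneg_left h2 (le_of_lt (pow_pos ht 2))
            have e6 : (2 * t) * (M / t * ‖x‖) = 2 * M * ‖x‖ := by
              field_simp
              try ring
            have e7 : t ^ 2 * (M / t ^ 2 * ‖x‖) = M * ‖x‖ := by
              field_simp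
              try ring
            rw [e6] at h4
            rw [e7] at h5
            rw [n4] at n2
            rw [n3] at n1
            linarith
          have hzm : ‖(T ^ (p + 1 + k)) ((T ^ 2) (R t x))‖
              ≤ M / t * ‖(T ^ (p + 1 + k + 1)) x‖ := by
            have e1 : (T ^ (p + 1 + k)) ((T ^ 2) (R t x))
                = T (R t ((T ^ (p + 1 + k + 1)) x)) := by
              rw [← hpowadd (p + 1 + k) 2 (R t x),
                show p + 1 + k + 2 = p + 1 + k + 1 + 1 from by omega,
                hpowsucc' (p + 1 + k + 1) (R t x),
                hcommN t ht (p + 1 + k + 1) (p + 1 + k + 1) x hx le_rfl]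
            rw [e1]
            exact hR2 t ht _
          have hTym : ‖(T ^ (p + 1 + k)) (T (R t x))‖
              ≤ M / t ^ 2 * ‖(T ^ (p + 1 + k + 1)) x‖ := by
            have e2 : (T ^ (p + 1 + k)) (T (R t x)) = R t ((T ^ (p + 1 + k + 1)) x) := by
              rw [← hpowsucc (p + 1 + k) (R t x),
                hcommN t ht (p + 1 + k + 1) (p + 1 + k + 1) x hx le_rfl]
            rw [e2]
            exact hR1 t ht _
          have hTy0 : ‖T (R t x)‖ ≤ M / t * ‖x‖ := hR2 t ht x
          -- the decomposition of Tⁿ x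
          have hdec : (T ^ (p + 1)) x
              = (T ^ (p + 1)) ((T ^ 2) (R t x))
                - (2 * t * Real.cos ω) • (T ^ (p + 1)) (T (R t x))
                + (t ^ 2 : ℝ) • (T ^ p) (T (R t x)) := by
            have h0 := hxid t ht x
            have h1 : (T ^ (p + 1)) x
                = (T ^ (p + 1)) ((T ^ 2) (R t x) - (2 * t * Real.cos ω) • T (R t x)
                    + (t ^ 2 : ℝ) • R t x) := by rw [← h0]
            rw [map_add, map_sub] at h1
            rw [hsmulpow (p + 1) (p + 1 + k + 1 + 1) (T (R t x)) (2 * t * Real.cos ω)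
              hTyD (by omega)] at h1
            rw [hsmulpow (p + 1) (p + 1 + k + 1 + 2) (R t x) (t ^ 2 : ℝ)
              hyD (by omega)] at h1
            rw [hpowsucc p (R t x)] at h1
            exact h1
          -- put everything together
          have cnn1 : (0 : ℝ) ≤ (4 + 12 * M) ^ (p + 1 + k) * t ^ (p + 1) :=
            mul_nonneg (pow_nonneg hC0.le _) (pow_nonneg ht.le _)
          have cnn1' : (0 : ℝ) ≤ (4 + 12 * M) ^ (p + 1 + k) * t ^ p :=
            mul_nonneg (pow_nonneg hC0.le _) (pow_nonneg ht.le _)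
          have cnn2 : (0 : ℝ) ≤ (4 + 12 * M) ^ (p + 1 + k) / t ^ k :=
            div_nonneg (pow_nonneg hC0.le _) (pow_nonneg ht.le _)
          have cnn3 : (0 : ℝ) ≤ (4 + 12 * M) ^ (p + 1 + k) / t ^ (k + 1) :=
            div_nonneg (pow_nonneg hC0.le _) (pow_nonneg ht.le _)
          have N1 : ‖(T ^ (p + 1)) ((T ^ 2) (R t x))‖
              ≤ (4 + 12 * M) ^ (p + 1 + k) * t ^ (p + 1) * ((1 + 3 * M) * ‖x‖)
                + (4 + 12 * M) ^ (p + 1 + k) / t ^ k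
                  * (M / t * ‖(T ^ (p + 1 + k + 1)) x‖) :=
            A1.trans (add_le_add (mul_le_mul_of_nonneg_left hz0 cnn1)
              (mul_le_mul_of_nonneg_left hzm cnn2))
          have N2 : ‖(T ^ (p + 1)) (T (R t x))‖
              ≤ (4 + 12 * M) ^ (p + 1 + k) * t ^ (p + 1) * (M / t * ‖x‖)
                + (4 + 12 * M) ^ (p + 1 + k) / t ^ k
                  * (M / t ^ 2 * ‖(T ^ (p + 1 + k + 1)) x‖) :=
            A2.trans (add_le_add (mul_le_mul_of_nonneg_left hTy0 cnn1)
              (mul_le_mul_of_nonneg_left hTym cnn2))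
          have N3 : ‖(T ^ p) (T (R t x))‖
              ≤ (4 + 12 * M) ^ (p + 1 + k) * t ^ p * (M / t * ‖x‖)
                + (4 + 12 * M) ^ (p + 1 + k) / t ^ (k + 1)
                  * (M / t ^ 2 * ‖(T ^ (p + 1 + k + 1)) x‖) :=
            A3.trans (add_le_add (mul_le_mul_of_nonneg_left hTy0 cnn1')
              (mul_le_mul_of_nonneg_left hTym cnn3))
          have eg : p + 1 + k + 1 - (p + 1) = k + 1 := by omega
          rw [eg]
          calc ‖(T ^ (p + 1)) x‖
              = ‖(T ^ (p + 1)) ((T ^ 2) (R t x))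
                  - (2 * t * Real.cos ω) • (T ^ (p + 1)) (T (R t x))
                  + (t ^ 2 : ℝ) • (T ^ p) (T (R t x))‖ := by rw [hdec]
            _ ≤ ‖(T ^ (p + 1)) ((T ^ 2) (R t x))‖
                  + |2 * t * Real.cos ω| * ‖(T ^ (p + 1)) (T (R t x))‖
                  + t ^ 2 * ‖(T ^ p) (T (R t x))‖ := by
                have n1 := norm_add_le
                  ((T ^ (p + 1)) ((T ^ 2) (R t x))
                    - (2 * t * Real.cos ω) • (T ^ (p + 1)) (T (R t x)))
                  ((t ^ 2 : ℝ) • (T ^ p) (T (R t x)))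
                have n2 := norm_sub_le ((T ^ (p + 1)) ((T ^ 2) (R t x)))
                  ((2 * t * Real.cos ω) • (T ^ (p + 1)) (T (R t x)))
                have n3 : ‖(2 * t * Real.cos ω) • (T ^ (p + 1)) (T (R t x))‖
                    = |2 * t * Real.cos ω| * ‖(T ^ (p + 1)) (T (R t x))‖ := by
                  rw [norm_smul, Real.norm_eq_abs]
                have n4 : ‖(t ^ 2 : ℝ) • (T ^ p) (T (R t x))‖
                    = t ^ 2 * ‖(T ^ p) (T (R t x))‖ := by
                  rw [norm_smul, Real.norm_eq_abs, abs_of_pos (pow_pos ht 2)]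
                rw [n4] at n1
                rw [n3] at n2
                linarith
            _ ≤ ‖(T ^ (p + 1)) ((T ^ 2) (R t x))‖
                  + (2 * t) * ‖(T ^ (p + 1)) (T (R t x))‖
                  + t ^ 2 * ‖(T ^ p) (T (R t x))‖ := by
                have := mul_le_mul_of_nonneg_right (hcosb t ht)
                  (norm_nonneg ((T ^ (p + 1)) (T (R t x))))
                linarith
            _ ≤ ((4 + 12 * M) ^ (p + 1 + k) * t ^ (p + 1) * ((1 + 3 * M) * ‖x‖)
                  + (4 + 12 * M) ^ (p + 1 + k) / t ^ k
                    * (M / t * ‖(T ^ (p + 1 + k + 1)) x‖))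
                + (2 * t) * ((4 + 12 * M) ^ (p + 1 + k) * t ^ (p + 1) * (M / t * ‖x‖)
                  + (4 + 12 * M) ^ (p + 1 + k) / t ^ k
                    * (M / t ^ 2 * ‖(T ^ (p + 1 + k + 1)) x‖))
                + t ^ 2 * ((4 + 12 * M) ^ (p + 1 + k) * t ^ p * (M / t * ‖x‖)
                  + (4 + 12 * M) ^ (p + 1 + k) / t ^ (k + 1)
                    * (M / t ^ 2 * ‖(T ^ (p + 1 + k + 1)) x‖)) := by
                have m2 := mul_le_mul_of_nonneg_left N2 (by linarith : (0:ℝ) ≤ 2 * t)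
                have m3 := mul_le_mul_of_nonneg_left N3 (le_of_lt (pow_pos ht 2))
                linarith
            _ = (4 + 12 * M) ^ (p + 1 + k)
                  * ((1 + 6 * M) * (t ^ (p + 1) * ‖x‖)
                    + (4 * M) * (‖(T ^ (p + 1 + k + 1)) x‖ / t ^ (k + 1))) := by
                field_simp
                ring
            _ ≤ (4 + 12 * M) ^ (p + 1 + k)
                  * ((4 + 12 * M) * (t ^ (p + 1) * ‖x‖)
                    + (4 + 12 * M) * (‖(T ^ (p + 1 + k + 1)) x‖ / t ^ (k + 1))) := by
                have b1 : (1 + 6 * M) ≤ 4 + 12 * M := by linarith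
                have b2 : (4 * M) ≤ 4 + 12 * M := by linarith
                have c1 : (0:ℝ) ≤ t ^ (p + 1) * ‖x‖ :=
                  mul_nonneg (pow_nonneg ht.le _) (norm_nonneg _)
                have c2 : (0:ℝ) ≤ ‖(T ^ (p + 1 + k + 1)) x‖ / t ^ (k + 1) :=
                  div_nonneg (norm_nonneg _) (pow_nonneg ht.le _)
                have hab := add_le_add (mul_le_mul_of_nonneg_right b1 c1)
                  (mul_le_mul_of_nonneg_right b2 c2)
                exact mul_le_mul_of_nonneg_left hab (pow_nonneg hC0.le _)
            _ = (4 + 12 * M) ^ (p + 1 + k + 1) * t ^ (p + 1) * ‖x‖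
                  + (4 + 12 * M) ^ (p + 1 + k + 1) / t ^ (k + 1)
                    * ‖(T ^ (p + 1 + k + 1)) x‖ := by
                rw [pow_succ]
                field_simp
                ring
      · have hnn : n = m + 1 := le_antisymm hn hnm
        subst hnn
        rw [Nat.sub_self, pow_zero, div_one]
        have h2 : ‖(T ^ (m + 1)) x‖ ≤ (4 + 12 * M) ^ (m + 1) * ‖(T ^ (m + 1)) x‖ := by
          nlinarith [norm_nonneg ((T ^ (m + 1)) x)]
        have h3 : 0 ≤ (4 + 12 * M) ^ (m + 1) * t ^ (m + 1) * ‖x‖ :=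
          mul_nonneg (mul_nonneg (pow_nonneg hC0.le _) (pow_nonneg ht.le _)) (norm_nonneg _)
        linarith
  intro n m hnm
  refine ⟨fun x hx j hj => hx j (lt_of_lt_of_le hj hnm), ?_⟩
  intro t ht x hx
  exact key m x hx t ht n hnm
end
end

section
/- Let T ∈ B(X) be a bounded right linear operator on a quaternionic right Banach space and s ∈ ℍ with |s| > ‖T‖. Then the series Σ_{n=0}^∞ Tⁿ s^{−n−1} converges in operator norm and equals (T² − 2Re(s)T + |s|²)^{-1}(conj(s) − T). -/
noncomputable section

open MulOpposite

local notation "ℍ" => Quaternion ℝ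

/-! Right multiplication by a quaternion `q` is a bounded real-linear operator `ρ q` commuting
with `T`, and `Q_s(T) = (ρ s - T)(ρ s̄ - T)` since `ρ s ρ s̄ = |s|²` and `ρ s + ρ s̄ = 2 Re s`.
Both factors commute and are inverted by Neumann series, that of `ρ s - T` being
`Σ Tⁿ s^{-n-1}`; hence `Q_s(T)⁻¹ (ρ s̄ - T) = (ρ s - T)⁻¹` is the sum of the series. -/

theorem Units.exists_hasSum_inv_pow_mul_pow {R : Type*} [NormedRing R] [HasSummableGeomSeries R]
    (u : Rˣ) {b : R} (hb : Commute (↑u⁻¹ : R) b) (h : ‖(↑u⁻¹ : R) * b‖ < 1) :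
    ∃ v : Rˣ, (v : R) = u - b ∧ HasSum (fun n ↦ (↑u⁻¹ : R) ^ (n + 1) * b ^ n) (↑v⁻¹ : R) := by
  have hterm (n : ℕ) : ((↑u⁻¹ : R) * b) ^ n * ↑u⁻¹ = (↑u⁻¹ : R) ^ (n + 1) * b ^ n := by
    rw [hb.mul_pow, pow_succ, mul_assoc, mul_assoc, (hb.pow_right n).eq]
  have hgeom := (summable_geometric_of_norm_lt_one h).hasSum.mul_right (↑u⁻¹ : R)
  simp only [hterm] at hgeom
  exact ⟨u * Units.oneSub _ h, by simp [mul_sub], hgeom⟩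

theorem HasSum.exists_norm_sum_apply_sub_le {𝕜 E F : Type*} [NontriviallyNormedField 𝕜]
    [SeminormedAddCommGroup E] [NormedSpace 𝕜 E] [SeminormedAddCommGroup F] [NormedSpace 𝕜 F]
    {f : ℕ → E →L[𝕜] F} {S : E →L[𝕜] F} (h : HasSum f S) :
    ∀ ε > (0 : ℝ), ∃ N : ℕ, ∀ k ≥ N, ∀ x : E, ‖∑ n ∈ Finset.range k, f n x - S x‖ ≤ ε * ‖x‖ := by
  intro ε hε
  obtain ⟨N, hN⟩ := Metric.tendsto_atTop.mp h.tendsto_sum_nat ε hε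
  refine ⟨N, fun k hk x ↦ ?_⟩
  calc ‖∑ n ∈ Finset.range k, f n x - S x‖ = ‖(∑ n ∈ Finset.range k, f n - S) x‖ := by
        simp
    _ ≤ ‖∑ n ∈ Finset.range k, f n - S‖ * ‖x‖ := ContinuousLinearMap.le_opNorm _ x
    _ ≤ ε * ‖x‖ := by
        gcongr
        rw [← dist_eq_norm]
        exact (hN k hk).le

section RightMul

variable {X : Type*} [NormedAddCommGroup X] [NormedSpace ℝ X] [Module ℍᵐᵒᵖ X]

/- The real structure of `X` is not assumed to be the restriction of the quaternionic one;
continuity of `r ↦ op r • x`, a consequence of `hnorm`, forces it. -/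
theorem op_ofReal_smul (hnorm : ∀ (x : X) (s : ℍ), ‖op s • x‖ = ‖x‖ * ‖s‖) (r : ℝ) (x : X) :
    op (r : ℍ) • x = r • x := by
  let f : ℝ →+ X := AddMonoidHom.mk' (fun r ↦ op (r : ℍ) • x) fun a b ↦ by simp [add_smul]
  have hf : Continuous f :=
    AddMonoidHomClass.continuous_of_bound f ‖x‖ fun r ↦ by simp [f, hnorm, mul_comm]
  simpa [f] using map_real_smul f hf r 1

variable [SMulCommClass ℍᵐᵒᵖ ℝ X]

def rightMul (hnorm : ∀ (x : X) (s : ℍ), ‖op s • x‖ = ‖x‖ * ‖s‖) :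
    ℍᵐᵒᵖ →ₐ[ℝ] (X →L[ℝ] X) where
  toFun q := (DistribSMul.toLinearMap ℝ X q).mkContinuous ‖q.unop‖ fun x ↦ by
    simpa [mul_comm] using (hnorm x q.unop).le
  map_one' := by ext; simp
  map_mul' _ _ := by ext; simp [mul_smul]
  map_zero' := by ext; simp
  map_add' _ _ := by ext; simp [add_smul]
  commutes' r := by ext; simp [MulOpposite.algebraMap_apply, op_ofReal_smul hnorm]

variable (hnorm : ∀ (x : X) (s : ℍ), ‖op s • x‖ = ‖x‖ * ‖s‖)

@[simp]
theorem rightMul_apply (q : ℍᵐᵒᵖ) (x : X) : rightMul hnorm q x = q • x := rfl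

theorem norm_rightMul_le (q : ℍᵐᵒᵖ) : ‖rightMul hnorm q‖ ≤ ‖q.unop‖ :=
  ContinuousLinearMap.opNorm_le_bound _ (norm_nonneg _) fun x ↦ by
    simpa [mul_comm] using (hnorm x q.unop).le

theorem rightMul_op_ofReal (r : ℝ) : rightMul hnorm (op (r : ℍ)) = r • 1 := by
  ext
  simp [op_ofReal_smul hnorm]

theorem rightMul_sub_mul_rightMul_star_sub {b : X →L[ℝ] X}
    (hb : ∀ q, Commute (rightMul hnorm q) b) (s : ℍ) :
    (rightMul hnorm (op s) - b) * (rightMul hnorm (op (star s)) - b) =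
      b ^ 2 - (2 * s.re) • b + (‖s‖ ^ 2) • 1 := by
  have hmul : rightMul hnorm (op s) * rightMul hnorm (op (star s)) = (‖s‖ ^ 2) • 1 := by
    rw [← map_mul, ← op_mul, Quaternion.star_mul_self, Quaternion.normSq_eq_norm_mul_self, ← sq,
      rightMul_op_ofReal]
  have hadd : rightMul hnorm (op s) + rightMul hnorm (op (star s)) = (2 * s.re) • 1 := by
    rw [← map_add, ← op_add, Quaternion.self_add_star', rightMul_op_ofReal]
  calc (rightMul hnorm (op s) - b) * (rightMul hnorm (op (star s)) - b)
      = rightMul hnorm (op s) * rightMul hnorm (op (star s))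
          - (rightMul hnorm (op s) + rightMul hnorm (op (star s))) * b + b ^ 2 := by
        rw [sub_mul, mul_sub, mul_sub, ← (hb (op (star s))).eq, add_mul, sq]
        abel
    _ = b ^ 2 - (2 * s.re) • b + (‖s‖ ^ 2) • 1 := by
        rw [hmul, hadd, smul_mul_assoc, one_mul]
        abel

variable [CompleteSpace X]

theorem exists_unit_eq_rightMul_sub {b : X →L[ℝ] X} (hb : ∀ q, Commute (rightMul hnorm q) b)
    {s : ℍ} (hs : ‖b‖ < ‖s‖) :
    ∃ v : (X →L[ℝ] X)ˣ, (v : X →L[ℝ] X) = rightMul hnorm (op s) - b ∧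
      HasSum (fun n ↦ rightMul hnorm (op (s⁻¹ ^ (n + 1))) * b ^ n) (↑v⁻¹ : X →L[ℝ] X) := by
  have hs0 : s ≠ 0 := by
    rintro rfl
    exact (norm_nonneg b).not_gt (by simpa using hs)
  let u := Units.map (rightMul hnorm : ℍᵐᵒᵖ →* X →L[ℝ] X)
    (Units.mk0 (op s) ((op_ne_zero_iff s).mpr hs0))
  have hu : (↑u⁻¹ : X →L[ℝ] X) = rightMul hnorm (op s⁻¹) := by simp [u]
  have hsmall : ‖(↑u⁻¹ : X →L[ℝ] X) * b‖ < 1 := calc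
    _ ≤ ‖s‖⁻¹ * ‖b‖ := by
        rw [hu]
        refine norm_mul_le_of_le ?_ le_rfl
        simpa using norm_rightMul_le hnorm (op s⁻¹)
    _ < 1 := by
        rw [inv_mul_lt_iff₀ ((norm_nonneg b).trans_lt hs), mul_one]
        exact hs
  obtain ⟨v, hv, hsum⟩ := u.exists_hasSum_inv_pow_mul_pow (hu ▸ hb _) hsmall
  refine ⟨v, by simpa [u] using hv, ?_⟩
  simpa [hu, ← map_pow, ← op_pow] using hsum

theorem exists_unit_eq_quadratic_hasSum {b : X →L[ℝ] X} (hb : ∀ q, Commute (rightMul hnorm q) b)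
    {s : ℍ} (hs : ‖b‖ < ‖s‖) :
    ∃ u : (X →L[ℝ] X)ˣ, (u : X →L[ℝ] X) = b ^ 2 - (2 * s.re) • b + (‖s‖ ^ 2) • 1 ∧
      HasSum (fun n ↦ rightMul hnorm (op (s⁻¹ ^ (n + 1))) * b ^ n)
        (↑u⁻¹ * (rightMul hnorm (op (star s)) - b)) := by
  obtain ⟨v, hv, hsum⟩ := exists_unit_eq_rightMul_sub hnorm hb hs
  obtain ⟨w, hw, -⟩ :=
    exists_unit_eq_rightMul_sub hnorm hb (s := star s) (by rwa [Quaternion.norm_star])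
  have hvw : Commute (v : X →L[ℝ] X) w := by
    rw [hv, hw]
    exact (((star_comm_self (x := s)).symm.op.map (rightMul hnorm)).sub_left (hb _).symm).sub_right
      ((hb _).sub_left (Commute.refl b))
  refine ⟨v * w, by rw [Units.val_mul, hv, hw, rightMul_sub_mul_rightMul_star_sub hnorm hb], ?_⟩
  rwa [← hw, mul_inv_rev, Units.val_mul, mul_assoc, hvw.units_inv_left.eq,
    Units.inv_mul_cancel_left]

end RightMul

theorem sResolvent_series_general
    {X : Type*} [NormedAddCommGroup X] [NormedSpace ℝ X] [CompleteSpace X]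
    [Module ℍᵐᵒᵖ X] [SMulCommClass ℍᵐᵒᵖ ℝ X]
    (hnorm : ∀ (x : X) (s : ℍ), ‖(op s) • x‖ = ‖x‖ * ‖s‖)
    (T : Module.End ℍᵐᵒᵖ X)
    (s : ℍ) (c : ℝ) (hc : 0 ≤ c) (hTb : ∀ x : X, ‖T x‖ ≤ c * ‖x‖) (hcs : c < ‖s‖) :
    ∃ Rs : Module.End ℍᵐᵒᵖ X, Continuous Rs ∧
      (∀ x : X, Qs T s (Rs x) = x) ∧ (∀ x : X, Rs (Qs T s x) = x) ∧
      (∀ x : X, HasSum (fun n : ℕ => (op (s⁻¹ ^ (n + 1))) • ((T ^ n) x))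
        (Rs ((op (star s)) • x - T x))) ∧
      ∀ ε > (0:ℝ), ∃ N : ℕ, ∀ k ≥ N, ∀ x : X,
        ‖(∑ n ∈ Finset.range k, (op (s⁻¹ ^ (n + 1))) • ((T ^ n) x))
            - Rs ((op (star s)) • x - T x)‖ ≤ ε * ‖x‖ := by
  let T' : X →L[ℝ] X :=
    AddMonoidHom.toRealLinearMap T (AddMonoidHomClass.continuous_of_bound T c hTb)
  have hT'_apply (x : X) : T' x = T x := rfl
  have hT' (n : ℕ) (x : X) : (T' ^ n) x = (T ^ n) x := by
    rw [FunLike.coe_pow_eq_iterate, Module.End.coe_pow]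
    rfl
  have hcomm (q : ℍᵐᵒᵖ) : Commute (rightMul hnorm q) T' :=
    ContinuousLinearMap.ext fun x ↦ (T.map_smul q x).symm
  obtain ⟨u, hu, hsum⟩ :=
    exists_unit_eq_quadratic_hasSum hnorm hcomm ((T'.opNorm_le_bound hc hTb).trans_lt hcs)
  have hQ : ⇑(Qs T s) = ⇑(u : X →L[ℝ] X) := by
    ext x
    simp [Qs, hu, ← hT', hT'_apply]
  let e := LinearEquiv.ofBijective (Qs T s)
    (hQ ▸ (ContinuousLinearEquiv.unitsEquiv ℝ X u).bijective)
  let Rs : Module.End ℍᵐᵒᵖ X := e.symm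
  have hRs : ⇑Rs = ⇑(↑u⁻¹ : X →L[ℝ] X) := by
    ext x
    refine e.symm_apply_eq.mpr ?_
    change x = Qs T s _
    rw [hQ]
    exact (DFunLike.congr_fun u.mul_inv x).symm
  have hval (x : X) :
      Rs (op (star s) • x - T x) = (↑u⁻¹ * (rightMul hnorm (op (star s)) - T')) x := by
    rw [hRs]
    rfl
  have hterm (n : ℕ) (x : X) :
      op (s⁻¹ ^ (n + 1)) • (T ^ n) x = (rightMul hnorm (op (s⁻¹ ^ (n + 1))) * T' ^ n) x := by
    simp [hT']
  refine ⟨Rs, hRs ▸ (↑u⁻¹ : X →L[ℝ] X).continuous, e.apply_symm_apply, e.symm_apply_apply,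
    fun x ↦ ?_, ?_⟩
  · simp only [hterm, hval]
    exact (ContinuousLinearMap.apply ℝ X x).hasSum hsum
  · simp only [hterm, hval]
    exact hsum.exists_norm_sum_apply_sub_le

/-- for a bounded right linear operator `T` and `s ∈ ℍ` with `|s| > ‖T‖`,
the series `Σ Tⁿ s^{-n-1}` converges (pointwise and in operator norm) to
`(T² − 2Re(s)T + |s|²)⁻¹ (conj(s) − T)`. -/
theorem sResolvent_series
    {X : Type*} [NormedAddCommGroup X] [NormedSpace ℝ X] [CompleteSpace X]
    [Module ℍᵐᵒᵖ X] [SMulCommClass ℍᵐᵒᵖ ℝ X]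
    (hnorm : ∀ (x : X) (s : ℍ), ‖(op s) • x‖ = ‖x‖ * ‖s‖)
    (T : Module.End ℍᵐᵒᵖ X) (hTcont : Continuous T)
    (s : ℍ) (c : ℝ) (hc : 0 ≤ c) (hTb : ∀ x : X, ‖T x‖ ≤ c * ‖x‖) (hcs : c < ‖s‖) :
    ∃ Rs : Module.End ℍᵐᵒᵖ X, Continuous Rs ∧
      (∀ x : X, Qs T s (Rs x) = x) ∧ (∀ x : X, Rs (Qs T s x) = x) ∧
      (∀ x : X, HasSum (fun n : ℕ => (op (s⁻¹ ^ (n + 1))) • ((T ^ n) x))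
        (Rs ((op (star s)) • x - T x))) ∧
      ∀ ε > (0:ℝ), ∃ N : ℕ, ∀ k ≥ N, ∀ x : X,
        ‖(∑ n ∈ Finset.range k, (op (s⁻¹ ^ (n + 1))) • ((T ^ n) x))
            - Rs ((op (star s)) • x - T x)‖ ≤ ε * ‖x‖ :=
  sResolvent_series_general hnorm T s c hc hTb hcs
end
end
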